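/- Let f : ℝ^d → ℝ satisfy, on a wedge K with vertex x₀, the condition that for all unit vectors e₀ and all 0 ≤ s̃ < t̃ with x₀ + t̃ e₀ ∈ K, (f(x₀ + t̃e₀) − f(x₀ + s̃e₀))/(t̃^j − s̃^j) ≥ m for some m > 0 (i.e., inf_K f^{(j)} ≥ m, j ∈ {1,2}). Let x = x₀ + t₁e + s₁e₁ + ⋯ + s_{d−1}e_{d−1} ∈ K and y = x₀ + t₀e + (t₀/t₁)s₁e₁ + ⋯ + (t₀/t₁)s_{d−1}e_{d−1} with 0 < t₀ < t₁. Then f(x) − f(y) ≥ (t₁^j − t₀^j)·m. -/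
import Mathlib


open RealInnerProductSpace


private lemma stmt10_aux (j : ℕ) (hj : j = 1 ∨ j = 2) (t₀ t₁ v r : ℝ)
    (ht₀ : 0 < t₀) (ht₁ : t₀ < t₁) (hv : t₁ ≤ v) (hr : r * t₁ = t₀) (hr0 : 0 < r)
    (hr1 : r < 1) : t₁ ^ j - t₀ ^ j ≤ v ^ j - (r * v) ^ j := by
  have h1 : t₁ ^ 2 ≤ v ^ 2 := by nlinarith
  have h2 : r ^ 2 ≤ 1 := by nlinarith
  have h3 : r ^ 2 * t₁ ^ 2 = t₀ ^ 2 := by rw [← hr]; ring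
  rcases hj with rfl | rfl
  · nlinarith [mul_nonneg (sub_nonneg.2 hv) (sub_nonneg.2 hr1.le)]
  · nlinarith [mul_nonneg (sub_nonneg.2 h1) (sub_nonneg.2 h2)]

theorem stmt10 (d j : ℕ) (hd : 1 ≤ d) (hj : j = 1 ∨ j = 2)
    (x₀ : EuclideanSpace ℝ (Fin d)) (b : OrthonormalBasis (Fin d) ℝ (EuclideanSpace ℝ (Fin d)))
    (i₀ : Fin d) (l φ : ℝ) (hl : 0 < l) (hφ : φ ∈ Set.Ioo 0 (Real.pi / 2))
    (K : Set (EuclideanSpace ℝ (Fin d)))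
    (hK : K = {x | 0 < ⟪x - x₀, b i₀⟫ ∧ ⟪x - x₀, b i₀⟫ ≤ l ∧
        ∀ i, i ≠ i₀ → |⟪x - x₀, b i⟫| ≤ Real.tan φ * ⟪x - x₀, b i₀⟫})
    (f : EuclideanSpace ℝ (Fin d) → ℝ) (m : ℝ) (hm : 0 < m)
    (hinf : ∀ e₀ : EuclideanSpace ℝ (Fin d), ‖e₀‖ = 1 → ∀ u v : ℝ, 0 ≤ u → u < v →
        x₀ + v • e₀ ∈ K →
        m ≤ (f (x₀ + v • e₀) - f (x₀ + u • e₀)) / (v ^ j - u ^ j))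
    (t₀ t₁ : ℝ) (ht₀ : 0 < t₀) (ht₁ : t₀ < t₁) (s : Fin d → ℝ) (hs : s i₀ = 0)
    (x y : EuclideanSpace ℝ (Fin d))
    (hx : x = x₀ + t₁ • b i₀ + ∑ i, s i • b i)
    (hy : y = x₀ + t₀ • b i₀ + (t₀ / t₁) • ∑ i, s i • b i)
    (hxK : x ∈ K) : (t₁ ^ j - t₀ ^ j) * m ≤ f x - f y := by
  have ht₁0 : (0:ℝ) < t₁ := ht₀.trans ht₁
  have hbij : ∀ i k : Fin d, ⟪b i, b k⟫ = if i = k then (1:ℝ) else 0 :=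
    orthonormal_iff_ite.mp b.orthonormal
  have hxx : x - x₀ = t₁ • b i₀ + ∑ i, s i • b i := by rw [hx]; abel
  have hinner : ⟪x - x₀, b i₀⟫ = t₁ := by
    rw [hxx, inner_add_left, inner_smul_left, sum_inner]
    simp [inner_smul_left, hbij, hs]
  have hv : t₁ ≤ ‖x - x₀‖ := by
    have := real_inner_le_norm (x - x₀) (b i₀)
    rw [hinner, b.orthonormal.1 i₀, mul_one] at this
    exact this
  set v := ‖x - x₀‖ with hvdef
  have hv0 : (0:ℝ) < v := ht₁0.trans_le hv
  set e₀ : EuclideanSpace ℝ (Fin d) := v⁻¹ • (x - x₀) with he₀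
  have hne : ‖e₀‖ = 1 := by
    rw [he₀, norm_smul, norm_inv, norm_norm, ← hvdef, inv_mul_cancel₀ hv0.ne']
  have hxe : x₀ + v • e₀ = x := by
    rw [he₀, smul_smul, mul_inv_cancel₀ hv0.ne', one_smul]; abel
  set r : ℝ := t₀ / t₁ with hr
  have hr0 : 0 < r := div_pos ht₀ ht₁0
  have hr1 : r < 1 := (div_lt_one ht₁0).mpr ht₁
  have hrt : r * t₁ = t₀ := div_mul_cancel₀ t₀ ht₁0.ne'
  have hye : x₀ + (r * v) • e₀ = y := by
    rw [he₀, smul_smul, mul_assoc, mul_inv_cancel₀ hv0.ne', mul_one, hy, hxx, smul_add,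
      smul_smul, hrt]
    abel
  have huv : r * v < v := by nlinarith
  have key := hinf e₀ hne (r * v) v (by positivity) huv (hxe ▸ hxK)
  rw [hxe, hye] at key
  have hj1 : 1 ≤ j := by rcases hj with rfl | rfl <;> norm_num
  have hpow : (r * v) ^ j < v ^ j := by
    exact pow_lt_pow_left₀ huv (by positivity) (by omega)
  have hpos : 0 < v ^ j - (r * v) ^ j := sub_pos.mpr hpow
  have key2 : m * (v ^ j - (r * v) ^ j) ≤ f x - f y := (le_div_iff₀ hpos).mp key
  have hle : t₁ ^ j - t₀ ^ j ≤ v ^ j - (r * v) ^ j :=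
    stmt10_aux j hj t₀ t₁ v r ht₀ ht₁ hv hrt hr0 hr1
  calc (t₁ ^ j - t₀ ^ j) * m ≤ (v ^ j - (r * v) ^ j) * m :=
        mul_le_mul_of_nonneg_right hle hm.le
    _ = m * (v ^ j - (r * v) ^ j) := mul_comm _ _
    _ ≤ f x - f y := key2
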